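/- Let k be a field, V a k-vector space, n a positive integer, and S a finite subset of V whose k-linear span is all of V. Write μ_n·S = {ζ • s : ζ ∈ k, ζ^n = 1, s ∈ S}. Let Γ be a group generated by a subset T, and let ρ : Γ → GL(V) be a group homomorphism such that for every t ∈ T and every s ∈ S there exist ζ ∈ k with ζ^n = 1 and u ∈ S with ρ(t) s = ζ • u. Then the image ρ(Γ) is a finite subgroup of GL(V). -/
import Mathlib


/-- If a group `Γ` generated by a set `T` acts linearly on a vector space `V`,
and each generator sends each element of a finite spanning set `S` to an
`n`-th root-of-unity multiple of an element of `S`, then the image of the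
representation is finite. -/
theorem stmt_1 {k V : Type*} [Field k] [AddCommGroup V] [Module k V]
    (n : ℕ) (hn : 0 < n) (S : Set V) (hSfin : S.Finite)
    (hspan : Submodule.span k S = ⊤)
    {Γ : Type*} [Group Γ] (T : Set Γ) (hT : Subgroup.closure T = ⊤)
    (ρ : Γ →* (V ≃ₗ[k] V))
    (h : ∀ t ∈ T, ∀ s ∈ S, ∃ ζ : k, ζ ^ n = 1 ∧ ∃ u ∈ S, ρ t s = ζ • u) :
    (Set.range ρ).Finite := by
  classical
  -- roots of unity are finite
  have hroots : ({ζ : k | ζ ^ n = 1}).Finite := by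
    have hp : (Polynomial.X ^ n - Polynomial.C 1 : Polynomial k) ≠ 0 := by
      intro hc
      have := congrArg Polynomial.natDegree hc
      rw [Polynomial.natDegree_X_pow_sub_C, Polynomial.natDegree_zero] at this
      omega
    refine (Polynomial.finite_setOf_isRoot hp).subset ?_
    intro x hx
    simp only [Set.mem_setOf_eq, Polynomial.IsRoot, Polynomial.eval_sub,
      Polynomial.eval_pow, Polynomial.eval_X, Polynomial.eval_C]
    rw [hx]; ring
  set M : Set V := (fun p : k × V => p.1 • p.2) '' ({ζ : k | ζ ^ n = 1} ×ˢ S) with hM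
  have hMfin : M.Finite := (hroots.prod hSfin).image _
  have hSM : S ⊆ M := by
    intro s hs
    exact ⟨(1, s), ⟨by simp, hs⟩, by simp⟩
  have hspanM : Submodule.span k M = ⊤ :=
    top_le_iff.mp (hspan ▸ Submodule.span_mono hSM)
  -- generators map M into M
  have hgen : ∀ t ∈ T, Set.MapsTo (ρ t) M M := by
    rintro t ht _ ⟨⟨ζ, s⟩, ⟨hζ, hs⟩, rfl⟩
    obtain ⟨ζ', hζ', u, hu, hu'⟩ := h t ht s hs
    refine ⟨(ζ * ζ', u), ⟨by simp only [Set.mem_setOf_eq] at hζ ⊢; rw [mul_pow, hζ, hζ', one_mul], hu⟩, ?_⟩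
    simp only [map_smul, hu', smul_smul]
  -- the subgroup of elements g such that ρ g and ρ g⁻¹ both map M to M
  have key : ∀ g : Γ, Set.MapsTo (ρ g) M M := by
    have : ∀ g : Γ, Set.MapsTo (ρ g) M M ∧ Set.MapsTo (ρ g⁻¹) M M := by
      intro g
      have hg : g ∈ Subgroup.closure T := hT ▸ Subgroup.mem_top g
      induction hg using Subgroup.closure_induction with
      | mem t ht =>
        have h1 : Set.MapsTo (ρ t) M M := hgen t ht
        have hinj : Set.InjOn (ρ t) M := (ρ t).injective.injOn
        have hbij : Set.BijOn (ρ t) M M :=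
          (hMfin.injOn_iff_bijOn_of_mapsTo h1).mp hinj
        refine ⟨h1, ?_⟩
        intro m hm
        obtain ⟨m', hm', hmm⟩ := hbij.surjOn hm
        have : (ρ t⁻¹) m = m' := by
          rw [← hmm, map_inv]
          exact (ρ t).symm_apply_apply m'
        rw [this]; exact hm'
      | one => simp [Set.MapsTo.comp]; exact fun m hm => hm
      | mul a b _ _ ha hb =>
        constructor
        · intro m hm
          rw [map_mul]
          exact ha.1 (hb.1 hm)
        · intro m hm
          rw [mul_inv_rev, map_mul]
          exact hb.2 (ha.2 hm)
      | inv a _ ha => exact ⟨by simpa using ha.2, by simpa using ha.1⟩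
    exact fun g => (this g).1
  -- range maps into finite function space
  have hMaps : ∀ f ∈ Set.range ρ, Set.MapsTo f M M := by
    rintro _ ⟨g, rfl⟩; exact key g
  have : Finite M := hMfin
  let F : Set.range ρ → (M → M) := fun f =>
    fun m => ⟨f.1 m, hMaps f.1 f.2 m.2⟩
  have hF : Function.Injective F := by
    intro f₁ f₂ hf
    have heq : Set.EqOn (f₁.1 : V →ₗ[k] V) (f₂.1 : V →ₗ[k] V) M := by
      intro m hm
      have := congrFun hf ⟨m, hm⟩
      simpa [F] using congrArg Subtype.val this
    have := LinearMap.ext_on hspanM heq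
    exact Subtype.ext (by
      apply LinearEquiv.toLinearMap_injective this)
  have : Finite (Set.range ρ) := Finite.of_injective F hF
  exact Set.finite_coe_iff.mp this
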